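/- For real or complex α, β, the deformed bivariate q-Appell polynomials of order α+β satisfy the addition formula P_{n,q}^{(α+β)}(x,y;u) = ∑_{k=0}^n [n choose k]_q P_{k,q}^{(α)}(x) P_{n-k,q}^{(β)}(y;u), where (A_q(t))^{α+β} = (A_q(t))^α (A_q(t))^β. -/
import Mathlib


open Finset

def qNum {K : Type*} [Field K] (q : K) (n : ℕ) : K := ∑ i ∈ Finset.range n, q ^ i

def qFact {K : Type*} [Field K] (q : K) : ℕ → K
  | 0 => 1
  | n + 1 => qFact q n * qNum q (n + 1)

def qBinom {K : Type*} [Field K] (q : K) (n k : ℕ) : K :=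
  qFact q n / (qFact q k * qFact q (n - k))

lemma qFact_ne_zero {K : Type*} [Field K] {q : K}
    (hq : ∀ n : ℕ, 0 < n → qNum q n ≠ 0) : ∀ m, qFact q m ≠ 0 := by
  intro m
  induction m with
  | zero => simp [qFact]
  | succ n ih => exact mul_ne_zero ih (hq (n + 1) (Nat.succ_pos n))

lemma binom_triple_L {K : Type*} [Field K] {q : K}
    (hF : ∀ m, qFact q m ≠ 0) {i j k n : ℕ} :
    qBinom q n k * qBinom q k j * qBinom q j i =
      qFact q n / (qFact q i * qFact q (j - i) * qFact q (k - j) * qFact q (n - k)) := by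
  unfold qBinom
  field_simp [hF]

lemma binom_triple_R {K : Type*} [Field K] {q : K}
    (hF : ∀ m, qFact q m ≠ 0) {p r k n : ℕ} :
    qBinom q n k * qBinom q k p * qBinom q (n - k) r =
      qFact q n / (qFact q p * qFact q r * qFact q (n - k - r) * qFact q (k - p)) := by
  unfold qBinom
  field_simp [hF]

lemma reindex_qAppell {K : Type*} [Field K] (n : ℕ) (G : ℕ → ℕ → ℕ → ℕ → K) :
    (∑ k ∈ range (n + 1), ∑ j ∈ range (k + 1), ∑ i ∈ range (j + 1),
        G i (j - i) (k - j) (n - k)) =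
      ∑ k ∈ range (n + 1), ∑ p ∈ range (k + 1), ∑ r ∈ range (n - k + 1),
        G p r (n - k - r) (k - p) := by
  conv_lhs => rw [Finset.sum_sigma', Finset.sum_sigma']
  conv_rhs => rw [Finset.sum_sigma', Finset.sum_sigma']
  refine Finset.sum_nbij' (fun y => ⟨⟨n - y.1.1 + y.2, y.2⟩, y.1.2 - y.2⟩)
    (fun z => ⟨⟨n - z.1.1 + z.1.2, z.1.2 + z.2⟩, z.1.2⟩) ?_ ?_ ?_ ?_ ?_
  · rintro ⟨⟨k, j⟩, i⟩ hy
    simp only [mem_sigma, mem_range] at *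
    omega
  · rintro ⟨⟨k, p⟩, r⟩ hz
    simp only [mem_sigma, mem_range] at *
    omega
  · rintro ⟨⟨k, j⟩, i⟩ hy
    simp only [mem_sigma, mem_range] at hy
    dsimp only
    simp only [Sigma.mk.inj_iff, heq_eq_eq, and_true, true_and]
    omega
  · rintro ⟨⟨k, p⟩, r⟩ hz
    simp only [mem_sigma, mem_range] at hz
    dsimp only
    simp only [Sigma.mk.inj_iff, heq_eq_eq, and_true, true_and]
    omega
  · rintro ⟨⟨k, j⟩, i⟩ hy
    simp only [mem_sigma, mem_range] at hy
    dsimp only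
    have e1 : n - (n - k + i) - (j - i) = k - j := by omega
    have e2 : n - k + i - i = n - k := by omega
    rw [e1, e2]

/-- Addition formula: P_n^{(α+β)}(x,y;u) = ∑_{k=0}^n [n,k]_q P_k^{(α)}(x) P_{n-k}^{(β)}(y;u),
given that the determining sequence c of order α+β is the q-convolution of a and b. -/
theorem deformed_bivariate_qAppell_add {K : Type*} [Field K] (q u : K)
    (hq : ∀ n : ℕ, 0 < n → qNum q n ≠ 0)
    (a b c : ℕ → K)
    (hconv : ∀ n : ℕ, c n = ∑ k ∈ Finset.range (n + 1), qBinom q n k * a k * b (n - k)) :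
    ∀ (n : ℕ) (x y : K),
      (∑ k ∈ Finset.range (n + 1), qBinom q n k *
          (∑ j ∈ Finset.range (k + 1),
            qBinom q k j * u ^ ((k - j).choose 2) * c j * y ^ (k - j)) * x ^ (n - k)) =
        ∑ k ∈ Finset.range (n + 1), qBinom q n k *
          (∑ j ∈ Finset.range (k + 1), qBinom q k j * a j * x ^ (k - j)) *
          (∑ j ∈ Finset.range (n - k + 1),
            qBinom q (n - k) j * u ^ ((n - k - j).choose 2) * b j * y ^ (n - k - j)) := by
  intro n x y
  have hF := qFact_ne_zero hq
  calc
    (∑ k ∈ Finset.range (n + 1), qBinom q n k *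
        (∑ j ∈ Finset.range (k + 1),
          qBinom q k j * u ^ ((k - j).choose 2) * c j * y ^ (k - j)) * x ^ (n - k))
      = ∑ k ∈ range (n + 1), ∑ j ∈ range (k + 1), ∑ i ∈ range (j + 1),
          qFact q n / (qFact q i * qFact q (j - i) * qFact q (k - j) * qFact q (n - k)) *
            a i * b (j - i) * u ^ ((k - j).choose 2) * y ^ (k - j) * x ^ (n - k) := by
        refine sum_congr rfl fun k hk => ?_
        simp only [hconv, Finset.mul_sum, Finset.sum_mul]
        refine sum_congr rfl fun j hj => ?_
        refine sum_congr rfl fun i hi => ?_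
        rw [← binom_triple_L hF (i := i) (j := j) (k := k) (n := n)]
        ring
    _ = ∑ k ∈ range (n + 1), ∑ p ∈ range (k + 1), ∑ r ∈ range (n - k + 1),
          qFact q n / (qFact q p * qFact q r * qFact q (n - k - r) * qFact q (k - p)) *
            a p * b r * u ^ ((n - k - r).choose 2) * y ^ (n - k - r) * x ^ (k - p) :=
        reindex_qAppell n (fun s t m w =>
          qFact q n / (qFact q s * qFact q t * qFact q m * qFact q w) *
            a s * b t * u ^ m.choose 2 * y ^ m * x ^ w)
    _ = ∑ k ∈ Finset.range (n + 1), qBinom q n k *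
          (∑ j ∈ Finset.range (k + 1), qBinom q k j * a j * x ^ (k - j)) *
          (∑ j ∈ Finset.range (n - k + 1),
            qBinom q (n - k) j * u ^ ((n - k - j).choose 2) * b j * y ^ (n - k - j)) := by
        refine sum_congr rfl fun k hk => ?_
        rw [Finset.sum_comm]
        simp only [Finset.mul_sum, Finset.sum_mul]
        refine sum_congr rfl fun r hr => ?_
        refine sum_congr rfl fun p hp => ?_
        rw [← binom_triple_R hF (p := p) (r := r) (k := k) (n := n)]
        ring
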